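/- Let m ≥ 2 and 1 ≤ k ≤ m−1. If w ∈ W_k satisfies ρ_m(ξ_v^+)w = 0 for all v ∈ ℂⁿ, then w = 0. Likewise, if w ∈ W_k satisfies ρ_m(ξ_v^-)w = 0 for all v ∈ ℂⁿ, then w = 0. -/

import Mathlib

open MvPolynomial

noncomputable section

/-- The matrix `ξ_v⁺ = [[0, v],[0, 0]]` in block form. -/
def xiP (n : ℕ) (v : Fin n → ℂ) : Matrix (Fin (n+1)) (Fin (n+1)) ℂ :=
  Matrix.of fun i j => if h : (i : ℕ) < n ∧ j = Fin.last n then v ⟨i, h.1⟩ else 0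

/-- The matrix `ξ_v⁻ = [[0, 0],[v*, 0]]` in block form. -/
def xiM (n : ℕ) (v : Fin n → ℂ) : Matrix (Fin (n+1)) (Fin (n+1)) ℂ :=
  Matrix.of fun i j =>
    if h : i = Fin.last n ∧ (j : ℕ) < n then (starRingEnd ℂ) (v ⟨j, h.2⟩) else 0

/-- The matrix `ξ_v = [[0, v],[v*, 0]]` in block form. -/
def xi (n : ℕ) (v : Fin n → ℂ) : Matrix (Fin (n+1)) (Fin (n+1)) ℂ := xiP n v + xiM n v

/-- The derived representation of `gl(n+1, ℂ)` on `W = S^m(ℂ^{n+1})`, realized on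
the polynomial ring `ℂ[x_1, …, x_{n+1}]` (a vector `v` corresponds to the linear
form `Σ v_i x_i` and the symmetric product to the product of polynomials, so that
`(u+w)^j = Σ binom(j,i) u^i w^{j-i}`); it acts by derivations. -/
def rho (n : ℕ) (M : Matrix (Fin (n+1)) (Fin (n+1)) ℂ) :
    MvPolynomial (Fin (n+1)) ℂ →ₗ[ℂ] MvPolynomial (Fin (n+1)) ℂ :=
  ∑ i, ∑ j, M j i • ((LinearMap.mulLeft ℂ (X j)) ∘ₗ (pderiv i).toLinearMap)

/-- The component `W_k = S^k(V_1)·e_{n+1}^{m-k}` of `W = S^m(ℂ^{n+1})`: the span of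
monomials of total degree `m` with degree `m - k` in the last variable. -/
def Wcomp (n m k : ℕ) : Submodule ℂ (MvPolynomial (Fin (n+1)) ℂ) :=
  Submodule.span ℂ {p | ∃ d : Fin (n+1) →₀ ℕ,
    (∑ i, d i) = m ∧ d (Fin.last n) = m - k ∧ p = monomial d 1}

/-! `ρ` sends the matrix unit `E_ab` to `x_a ∂_b`, and `ξ⁺`, `ξ⁻` of a standard basis vector
`e_j` are the matrix units `E_{j,n+1}` and `E_{n+1,j}`. Since `x_a` is not a zero divisor, the
hypotheses give `∂_{n+1} w = 0`, resp. `∂_j w = 0` for all `j ≤ n`. In characteristic zero a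
polynomial killed by `∂_i` has no monomial containing `x_i`, while every monomial of `W_k` contains
`x_{n+1}` (with exponent `m - k ≥ 1`) and some `x_j`, `j ≤ n` (their exponents add up to `k ≥ 1`). -/

namespace MvPolynomial

variable {σ R : Type*} [CommSemiring R] [NoZeroDivisors R] [CharZero R]

theorem coeff_eq_zero_of_pderiv_eq_zero {i : σ} {p : MvPolynomial σ R} (hp : pderiv i p = 0)
    {d : σ →₀ ℕ} (hd : d i ≠ 0) : coeff d p = 0 := by
  have h := coeff_pderiv (i := i) p (d - Finsupp.single i 1)
  rw [hp, coeff_zero, Finsupp.sub_add_single_one_cancel hd] at h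
  exact (mul_eq_zero.mp h.symm).resolve_right (by norm_cast)

theorem eq_zero_of_forall_mem_support_exists_pderiv_eq_zero {p : MvPolynomial σ R}
    (h : ∀ d ∈ p.support, ∃ i, d i ≠ 0 ∧ pderiv i p = 0) : p = 0 := by
  refine support_eq_empty.mp (Finset.eq_empty_of_forall_notMem fun d hd => ?_)
  obtain ⟨i, hdi, hp⟩ := h d hd
  exact mem_support_iff.mp hd (coeff_eq_zero_of_pderiv_eq_zero hp hdi)

end MvPolynomial

theorem Fin.exists_castSucc_ne_zero_of_last_lt_sum {n : ℕ} (d : Fin (n+1) → ℕ)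
    (h : d (Fin.last n) < ∑ i, d i) : ∃ j : Fin n, d j.castSucc ≠ 0 := by
  by_contra! h0
  simp [Fin.sum_univ_castSucc, h0] at h

theorem Wcomp_eq_restrictSupport (n m k : ℕ) :
    Wcomp n m k = restrictSupport ℂ {d | ∑ i, d i = m ∧ d (Fin.last n) = m - k} := by
  rw [restrictSupport_eq_span, Wcomp]
  congr 1
  ext p
  simp [eq_comm (a := p), and_assoc]

theorem rho_apply (n : ℕ) (M : Matrix (Fin (n+1)) (Fin (n+1)) ℂ)
    (w : MvPolynomial (Fin (n+1)) ℂ) :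
    rho n M w = ∑ i, ∑ j, M j i • (X j * pderiv i w) := by
  simp [rho]

theorem rho_single (n : ℕ) (a b : Fin (n+1)) (c : ℂ) (w : MvPolynomial (Fin (n+1)) ℂ) :
    rho n (Matrix.single a b c) w = c • (X a * pderiv b w) := by
  simp [rho_apply, Matrix.single_apply, ite_and, ite_smul]

theorem pderiv_eq_zero_of_rho_single_eq_zero {n : ℕ} {a b : Fin (n+1)} {c : ℂ} (hc : c ≠ 0)
    {w : MvPolynomial (Fin (n+1)) ℂ} (h : rho n (Matrix.single a b c) w = 0) :
    pderiv b w = 0 := by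
  rw [rho_single, smul_eq_zero, mul_eq_zero] at h
  exact (h.resolve_left hc).resolve_left (X_ne_zero a)

theorem xiP_single (n : ℕ) (j : Fin n) :
    xiP n (Pi.single j 1) = Matrix.single j.castSucc (Fin.last n) 1 := by
  ext a b
  induction a using Fin.lastCases <;> induction b using Fin.lastCases <;>
    simp [xiP, Matrix.single_apply, Pi.single_apply, eq_comm]

theorem xiM_single (n : ℕ) (j : Fin n) :
    xiM n (Pi.single j 1) = Matrix.single (Fin.last n) j.castSucc 1 := by
  ext a b
  induction a using Fin.lastCases <;> induction b using Fin.lastCases <;>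
    simp [xiM, Matrix.single_apply, Pi.single_apply, eq_comm]

theorem rho_killed_eq_zero_general (n m k : ℕ) (hk : 1 ≤ k) (hk' : k ≤ m - 1)
    (w : MvPolynomial (Fin (n+1)) ℂ) (hw : w ∈ Wcomp n m k) :
    ((∀ v : Fin n → ℂ, rho n (xiP n v) w = 0) → w = 0)
    ∧ ((∀ v : Fin n → ℂ, rho n (xiM n v) w = 0) → w = 0) := by
  rw [Wcomp_eq_restrictSupport, mem_restrictSupport_iff] at hw
  have hsupp (d) (hd : d ∈ w.support) : d (Fin.last n) ≠ 0 ∧ ∃ j : Fin n, d j.castSucc ≠ 0 := by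
    obtain ⟨hsum, hlast⟩ := hw hd
    exact ⟨by omega, Fin.exists_castSucc_ne_zero_of_last_lt_sum d (by omega)⟩
  refine ⟨fun hP => ?_, fun hM => ?_⟩ <;>
    refine eq_zero_of_forall_mem_support_exists_pderiv_eq_zero fun d hd => ?_ <;>
    obtain ⟨hlast, j, hj⟩ := hsupp d hd
  · have h := hP (Pi.single j 1)
    rw [xiP_single] at h
    exact ⟨Fin.last n, hlast, pderiv_eq_zero_of_rho_single_eq_zero one_ne_zero h⟩
  · have h := hM (Pi.single j 1)
    rw [xiM_single] at h
    exact ⟨j.castSucc, hj, pderiv_eq_zero_of_rho_single_eq_zero one_ne_zero h⟩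

/-- For `1 ≤ k ≤ m-1`: if `w ∈ W_k` is killed by all `ρ_m(ξ_v⁺)` (resp. all
`ρ_m(ξ_v⁻)`) then `w = 0`. -/
theorem rho_killed_eq_zero (n m k : ℕ) (hm : 2 ≤ m) (hk : 1 ≤ k) (hk' : k ≤ m - 1)
    (w : MvPolynomial (Fin (n+1)) ℂ) (hw : w ∈ Wcomp n m k) :
    ((∀ v : Fin n → ℂ, rho n (xiP n v) w = 0) → w = 0)
    ∧ ((∀ v : Fin n → ℂ, rho n (xiM n v) w = 0) → w = 0) :=
  rho_killed_eq_zero_general n m k hk hk' w hw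

end
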